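/- arXiv:1410.7736 — 3 statements merged into one kernel-verified Lean document; each statement's English description precedes it below -/
import Mathlib

section
/- Let s₁, …, s_n be real numbers that are linearly independent over ℚ. Then the pushforward of the normalized Haar measure μ₀ on R̄ under the evaluation map R̄ → 𝕋ⁿ, x̄ ↦ (x̄(s₁), …, x̄(s_n)), equals the normalized Haar measure on the n-torus 𝕋ⁿ. In particular, for any measurable U ⊆ 𝕋 with Haar measure μ_H(U), the set Z = {x̄ ∈ R̄ | x̄(sᵢ) ∈ U for all i = 1,…,n} satisfies μ₀(Z) = (μ_H(U))ⁿ. -/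
open MeasureTheory

noncomputable instance : MeasurableSpace Circle := borel Circle
instance : BorelSpace Circle := ⟨rfl⟩

/-- The Bohr compactification of `ℝ`: the subgroup of the compact product group
`ℝ → Circle` consisting of all (not necessarily continuous) group homomorphisms
from the additive group `ℝ` to the circle group. -/
noncomputable def bohrRSubgroup : Subgroup (ℝ → Circle) where
  carrier := {f | ∀ a b : ℝ, f (a + b) = f a * f b}
  mul_mem' {f g} hf hg := by
    intro a b
    simp only [Pi.mul_apply, hf a b, hg a b]
    exact mul_mul_mul_comm _ _ _ _
  one_mem' := by intro a b; simp
  inv_mem' {f} hf := by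
    intro a b
    simp only [Pi.inv_apply, hf a b, mul_inv_rev]
    exact mul_comm _ _

/-- The Bohr compactification of `ℝ`, as a topological group. -/
abbrev RBar : Type := bohrRSubgroup

lemma isClosed_bohrR : IsClosed (bohrRSubgroup : Set (ℝ → Circle)) := by
  have h : (bohrRSubgroup : Set (ℝ → Circle))
      = ⋂ (a : ℝ) (b : ℝ), {f : ℝ → Circle | f (a + b) = f a * f b} := by
    ext f; simp only [Set.mem_iInter, Set.mem_setOf_eq, SetLike.mem_coe]
    exact ⟨fun h a b => h a b, fun h a b => h a b⟩
  rw [h]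
  exact isClosed_iInter fun a => isClosed_iInter fun b =>
    isClosed_eq (continuous_apply _) ((continuous_apply a).mul (continuous_apply b))

instance : CompactSpace RBar :=
  isCompact_iff_compactSpace.mp isClosed_bohrR.isCompact

noncomputable instance : MeasurableSpace RBar := borel RBar
instance : BorelSpace RBar := ⟨rfl⟩

/-!
The evaluation map `x̄ ↦ (x̄(s₁), …, x̄(sₙ))` is a continuous homomorphism of compact groups, so
it pushes Haar measure to Haar measure as soon as it is surjective. Surjectivity is where
rational independence enters: a target `(t₁, …, tₙ)` is hit by `r ↦ exp(i ℓ(r))` for any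
`ℚ`-linear `ℓ : ℝ → ℝ` with `ℓ(sᵢ) = arg tᵢ`, and such an `ℓ` exists because the `sᵢ` extend
to a Hamel basis.
-/

theorem LinearIndependent.exists_linearMap_apply_eq {K V W ι : Type*} [Field K]
    [AddCommGroup V] [Module K V] [AddCommGroup W] [Module K W] {s : ι → V}
    (hs : LinearIndependent K s) (θ : ι → W) : ∃ ℓ : V →ₗ[K] W, ∀ i, ℓ (s i) = θ i := by
  let b := Module.Basis.span hs
  obtain ⟨ℓ, hℓ⟩ := LinearMap.exists_extend (b.constr K θ)
  refine ⟨ℓ, fun i => ?_⟩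
  have hbi : ((b i : Submodule.span K (Set.range s)) : V) = s i := by
    rw [Module.Basis.span_apply]
  rw [← hbi, ← Submodule.subtype_apply, ← LinearMap.comp_apply, hℓ, b.constr_basis]

namespace RBar

noncomputable def expOfLinearMap (ℓ : ℝ →ₗ[ℚ] ℝ) : RBar :=
  ⟨fun r => Circle.exp (ℓ r), fun a b => by simp only [map_add, Circle.exp_add]⟩

variable {ι : Type*}

def evalHom (s : ι → ℝ) : RBar →* (ι → Circle) where
  toFun x i := (x : ℝ → Circle) (s i)
  map_one' := rfl
  map_mul' _ _ := rfl

theorem continuous_evalHom (s : ι → ℝ) : Continuous (evalHom s) :=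
  continuous_pi fun i => (continuous_apply (s i)).comp continuous_subtype_val

theorem evalHom_surjective {s : ι → ℝ} (hs : LinearIndependent ℚ s) :
    Function.Surjective (evalHom s) := by
  intro t
  obtain ⟨ℓ, hℓ⟩ := hs.exists_linearMap_apply_eq fun i => Complex.arg (t i)
  refine ⟨expOfLinearMap ℓ, funext fun i => ?_⟩
  simp only [evalHom, expOfLinearMap, MonoidHom.coe_mk, OneHom.coe_mk, hℓ i, Circle.exp_arg]

theorem measurePreserving_evalHom [Fintype ι] (μ₀ : Measure RBar) [μ₀.IsHaarMeasure]
    [IsProbabilityMeasure μ₀] (μH : Measure Circle) [μH.IsHaarMeasure] [IsProbabilityMeasure μH]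
    {s : ι → ℝ} (hs : LinearIndependent ℚ s) :
    MeasurePreserving (evalHom s) μ₀ (Measure.pi fun _ => μH) :=
  (evalHom s).measurePreserving (continuous_evalHom s) (evalHom_surjective hs) (by simp)

end RBar

/-- Pushforward of the normalized Haar measure on the Bohr compactification of `ℝ`
under evaluation at rationally independent reals `s₁, …, sₙ` is the normalized Haar
measure on the `n`-torus; in particular the measure of
`{x̄ | x̄(sᵢ) ∈ U for all i}` is `μ_H(U)ⁿ`. -/
theorem map_haar_eval_eq_pi_haar
    (μ₀ : Measure RBar) [μ₀.IsHaarMeasure] [IsProbabilityMeasure μ₀]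
    (μH : Measure Circle) [μH.IsHaarMeasure] [IsProbabilityMeasure μH]
    (n : ℕ) (s : Fin n → ℝ) (hs : LinearIndependent ℚ s) :
    μ₀.map (fun x : RBar => fun i : Fin n => (x : ℝ → Circle) (s i))
      = Measure.pi (fun _ : Fin n => μH) ∧
    ∀ U : Set Circle, MeasurableSet U →
      μ₀ {x : RBar | ∀ i : Fin n, (x : ℝ → Circle) (s i) ∈ U} = (μH U) ^ n := by
  have hmp := RBar.measurePreserving_evalHom μ₀ μH hs
  refine ⟨hmp.map_eq, fun U hU => ?_⟩
  have hZ : {x : RBar | ∀ i : Fin n, (x : ℝ → Circle) (s i) ∈ U}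
      = RBar.evalHom s ⁻¹' Set.univ.pi fun _ => U := by
    ext x
    simp [RBar.evalHom]
  rw [hZ, hmp.measure_preimage (MeasurableSet.univ_pi fun _ => hU).nullMeasurableSet,
    Measure.pi_pi, Finset.prod_const, Finset.card_univ, Fintype.card_fin]
end

section
/- The Haar measure μ₀ on R̄ is supported on the set W of all elements x̄ ∈ R̄ which, as maps from ℝ to 𝕋, are discontinuous at every point of ℝ. Equivalently, the complement W^c = {x̄ ∈ R̄ | there exists s₀ ∈ ℝ at which x̄ : ℝ → 𝕋 is continuous} is contained in a subset of R̄ of μ₀-measure zero (i.e. W^c is μ₀-null). -/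
/-!
A point `x̄ ∈ R̄` continuous at one point is a continuous character of `ℝ`, hence of the form
`t ↦ exp (i c t)` (lift it through the covering `exp : ℝ → 𝕋`). These characters form a
σ-compact, hence measurable, subgroup `H`. If `μ₀ H > 0`, Steinhaus' theorem makes `H` open, so
of finite index in the compact group `R̄`; as `R̄` is divisible (`t ↦ x̄ (t / n)` is an `n`-th root
of `x̄`), this forces `H = R̄`. But a `ℚ`-linear `g : ℝ → ℝ` with `g 1 = 0 ≠ g √2` yields the
character `exp (i g)`, which is not of that form.
-/

open MeasureTheory

lemma IsSigmaCompact.measurableSet {X : Type*} [TopologicalSpace X] [MeasurableSpace X]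
    [OpensMeasurableSpace X] [T2Space X] {s : Set X} (hs : IsSigmaCompact s) : MeasurableSet s := by
  obtain ⟨K, hK, rfl⟩ := hs
  exact .iUnion fun n => (hK n).isClosed.measurableSet

lemma Subgroup.isOpen_of_haar_pos {G : Type*} [Group G] [TopologicalSpace G]
    [IsTopologicalGroup G] [CompactSpace G] [MeasurableSpace G] [BorelSpace G]
    (μ : Measure G) [μ.IsHaarMeasure] (H : Subgroup G) (hH : MeasurableSet (H : Set G))
    (hpos : 0 < μ H) : IsOpen (H : Set G) := by
  refine H.isOpen_of_mem_nhds (g := 1) (Filter.mem_of_superset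
    (Measure.div_mem_nhds_one_of_haar_pos_ne_top μ H hH hpos (measure_ne_top μ _)) ?_)
  rintro _ ⟨a, ha, b, hb, rfl⟩
  exact H.div_mem ha hb

lemma Subgroup.eq_top_of_index_ne_zero {G : Type*} [CommGroup G] [RootableBy G ℕ] (H : Subgroup G)
    (hH : H.index ≠ 0) : H = ⊤ := by
  refine eq_top_iff.mpr fun x _ => ?_
  rw [← RootableBy.root_cancel x hH]
  exact H.pow_index_mem _

lemma Subgroup.haar_eq_zero_of_ne_top {G : Type*} [CommGroup G] [TopologicalSpace G]
    [IsTopologicalGroup G] [CompactSpace G] [MeasurableSpace G] [BorelSpace G] [RootableBy G ℕ]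
    (μ : Measure G) [μ.IsHaarMeasure] {H : Subgroup G} (hH : MeasurableSet (H : Set G))
    (hne : H ≠ ⊤) : μ H = 0 := by
  by_contra h
  have := H.quotient_finite_of_isOpen (H.isOpen_of_haar_pos μ hH (pos_iff_ne_zero.mpr h))
  exact hne (H.eq_top_of_index_ne_zero Subgroup.index_ne_zero_of_finite)

lemma AddChar.continuous_of_continuousAt {A M : Type*} [AddGroup A] [TopologicalSpace A]
    [IsTopologicalAddGroup A] [Monoid M] [TopologicalSpace M] [ContinuousMul M]
    (ψ : AddChar A M) {a : A} (h : ContinuousAt ψ a) : Continuous ψ := by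
  refine continuous_iff_continuousAt.mpr fun s => ?_
  have hψ : ⇑ψ = fun t => ψ (s - a) * ψ (a + (-s + t)) := by
    funext t
    rw [← ψ.map_add_eq_mul]
    simp [sub_eq_add_neg, add_assoc]
  rw [hψ]
  refine continuousAt_const.mul (ContinuousAt.comp ?_ (by fun_prop))
  simpa using h

lemma AddChar.exists_eq_circleExp_mul (ψ : AddChar ℝ Circle) (hψ : Continuous ψ) :
    ∃ c : ℝ, ∀ t, ψ t = Circle.exp (c * t) := by
  obtain ⟨F, ⟨hF0, hF⟩, -⟩ := Circle.isCoveringMap_exp.existsUnique_continuousMap_lifts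
    ⟨ψ, hψ⟩ 0 0 (by simp)
  have hψF (t : ℝ) : Circle.exp (F t) = ψ t := congrFun hF t
  -- Both sides lift `t ↦ ψ (s + t)` through the covering `Circle.exp` and agree at `0`.
  have hadd (s t : ℝ) : F (s + t) = F s + F t := by
    refine congrFun (Circle.isCoveringMap_exp.eq_of_comp_eq (g₁ := fun t => F (s + t))
      (g₂ := fun t => F s + F t) (by fun_prop) (by fun_prop) ?_ 0 (by simp [hF0])) t
    funext t
    simp only [Function.comp_apply, Circle.exp_add, hψF, ψ.map_add_eq_mul]
  refine ⟨F 1, fun t => ?_⟩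
  rw [← hψF, mul_comm]
  congr 1
  simpa using map_real_smul (⟨⟨F, hF0⟩, hadd⟩ : ℝ →+ ℝ) F.continuous t 1

lemma eq_zero_of_forall_circleExp_div_eq_one {a : ℝ}
    (h : ∀ n : ℕ, n ≠ 0 → Circle.exp (a / n) = 1) : a = 0 := by
  obtain ⟨n, hn⟩ := exists_nat_gt (|a| / Real.pi)
  have hnpos : (0 : ℝ) < n := lt_of_le_of_lt (by positivity) hn
  have hsmall : |a / n| < Real.pi := by
    rw [abs_div, Nat.abs_cast, div_lt_iff₀ hnpos]
    rwa [div_lt_iff₀ Real.pi_pos, mul_comm] at hn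
  have := Circle.arg_exp (neg_lt_of_abs_lt hsmall) (le_of_abs_le hsmall.le)
  rw [h n (by exact_mod_cast hnpos.ne'), Circle.coe_one, Complex.arg_one] at this
  exact (div_eq_zero_iff.mp this.symm).resolve_right hnpos.ne'

lemma LinearMap.eq_mul_of_circleExp_comp_eq (g : ℝ →ₗ[ℚ] ℝ) {c : ℝ}
    (h : ∀ t, Circle.exp (g t) = Circle.exp (c * t)) (t : ℝ) : g t = c * t := by
  refine (sub_eq_zero.mp (eq_zero_of_forall_circleExp_div_eq_one fun n hn => ?_)).symm
  have hg : g (t / n) = g t / n := by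
    simpa [Rat.smul_def, div_eq_inv_mul] using g.map_smul ((n : ℚ)⁻¹) t
  rw [sub_div, Circle.exp_sub, ← hg, h, mul_div_assoc, div_self']

lemma exists_ratLinearMap_map_one_eq_zero_map_sqrt_two_ne_zero :
    ∃ g : ℝ →ₗ[ℚ] ℝ, g 1 = 0 ∧ g (Real.sqrt 2) ≠ 0 := by
  have hs : Real.sqrt 2 ∉ Submodule.span ℚ {(1 : ℝ)} := by
    rw [Submodule.mem_span_singleton]
    rintro ⟨q, hq⟩
    exact irrational_sqrt_two ⟨q, by simpa [Rat.smul_def] using hq⟩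
  obtain ⟨f, hf, hmap⟩ := Submodule.exists_dual_map_eq_bot_of_notMem hs inferInstance
  refine ⟨(Algebra.linearMap ℚ ℝ).comp f, ?_, by simpa using hf⟩
  have h1 := Submodule.mem_map_of_mem (f := f) (Submodule.mem_span_singleton_self (1 : ℝ))
  rw [hmap, Submodule.mem_bot] at h1
  simp [h1]

namespace RBar

def toAddChar (x : RBar) : AddChar ℝ Circle where
  toFun := x
  map_zero_eq_one' := by simpa using x.2 0 0
  map_add_eq_mul' := x.2

noncomputable instance : RootableBy RBar ℕ where
  root x n :=
    ⟨fun t => (x : ℝ → Circle) (t / n), fun a b => by simpa [add_div] using x.2 _ _⟩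
  root_zero x := Subtype.ext <| funext fun t => by
    change x.toAddChar (t / ((0 : ℕ) : ℝ)) = 1
    rw [Nat.cast_zero, div_zero, AddChar.map_zero_eq_one]
  root_cancel x hn := Subtype.ext <| funext fun t => by
    change x.toAddChar (t / _) ^ _ = x.toAddChar t
    rw [← AddChar.map_nsmul_eq_pow, nsmul_eq_mul, mul_div_cancel₀ t (Nat.cast_ne_zero.mpr hn)]

noncomputable def exp (c : ℝ) : RBar :=
  ⟨fun t => Circle.exp (c * t), fun a b => by simp only [mul_add, Circle.exp_add]⟩

lemma continuous_exp : Continuous exp :=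
  .subtype_mk (continuous_pi fun t => Circle.exp.continuous.comp (by fun_prop)) _

def continuousSubgroup : Subgroup RBar where
  carrier := {x | Continuous (x : ℝ → Circle)}
  mul_mem' hx hy := hx.mul hy
  one_mem' := continuous_const
  inv_mem' hx := hx.inv

lemma coe_continuousSubgroup : (continuousSubgroup : Set RBar) = Set.range exp := by
  ext x
  refine ⟨fun hx => ?_, ?_⟩
  · obtain ⟨c, hc⟩ := x.toAddChar.exists_eq_circleExp_mul hx
    exact ⟨c, Subtype.ext (funext fun t => (hc t).symm)⟩
  · rintro ⟨c, rfl⟩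
    exact Circle.exp.continuous.comp (by fun_prop)

lemma measurableSet_continuousSubgroup : MeasurableSet (continuousSubgroup : Set RBar) := by
  rw [coe_continuousSubgroup]
  exact (isSigmaCompact_range continuous_exp).measurableSet

lemma continuousSubgroup_ne_top : continuousSubgroup ≠ ⊤ := by
  obtain ⟨g, hg1, hg2⟩ := exists_ratLinearMap_map_one_eq_zero_map_sqrt_two_ne_zero
  let x : RBar := ⟨fun t => Circle.exp (g t), fun a b => by simp only [map_add, Circle.exp_add]⟩
  intro htop
  have hx : x ∈ continuousSubgroup := htop ▸ Subgroup.mem_top x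
  obtain ⟨c, hc⟩ := x.toAddChar.exists_eq_circleExp_mul hx
  have hgc := g.eq_mul_of_circleExp_comp_eq hc
  have hc0 : c = 0 := by simpa [hg1] using (hgc 1).symm
  exact hg2 (by simpa [hc0] using hgc (Real.sqrt 2))

end RBar

theorem haar_supported_on_everywhere_discontinuous_general
    (μ₀ : Measure RBar) [μ₀.IsHaarMeasure] :
    μ₀ {x : RBar | ∃ s₀ : ℝ, ContinuousAt (fun k : ℝ => (x : ℝ → Circle) k) s₀} = 0 :=
  measure_mono_null (fun x ⟨_, hx⟩ => x.toAddChar.continuous_of_continuousAt hx)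
    (RBar.continuousSubgroup.haar_eq_zero_of_ne_top μ₀ RBar.measurableSet_continuousSubgroup
      RBar.continuousSubgroup_ne_top)

/-- The normalized Haar measure on the Bohr compactification of `ℝ` is supported on
the set of everywhere-discontinuous homomorphisms: the set of `x̄ ∈ R̄` that are
continuous at some point `s₀ ∈ ℝ` is `μ₀`-null. -/
theorem haar_supported_on_everywhere_discontinuous
    (μ₀ : Measure RBar) [μ₀.IsHaarMeasure] [IsProbabilityMeasure μ₀] :
    μ₀ {x : RBar | ∃ s₀ : ℝ, ContinuousAt (fun k : ℝ => (x : ℝ → Circle) k) s₀} = 0 :=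
  haar_supported_on_everywhere_discontinuous_general μ₀
end

section
/- The Haar measure μ₀ on R̄ is ergodic with respect to the action of ℝ∖{0} given by (λ* x̄)(k) = x̄(λk): if ψ ∈ L²(R̄, μ₀) satisfies, for every λ ≠ 0, ψ(λ* x̄) = ψ(x̄) for μ₀-almost every x̄ ∈ R̄, then ψ is equal μ₀-almost everywhere to a constant function. -/
open MeasureTheory

/-- For `λ ∈ ℝ`, the rescaling map `λ* : R̄ → R̄`, `(λ* x̄)(k) = x̄(λ k)`. -/
noncomputable def scaleBohr (l : ℝ) (x : RBar) : RBar :=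
  ⟨fun k : ℝ => (x : ℝ → Circle) (l * k), by
    intro a b
    simp only [mul_add]
    exact x.2 (l * a) (l * b)⟩

/-! The characters `x̄ ↦ x̄(k)`, `k ∈ ℝ`, form a Hilbert basis of `L²(R̄, μ₀)`: they are
orthonormal because each nontrivial one takes the value `-1` somewhere, so its integral is
killed by a translation, and their span is dense by Stone–Weierstrass. Rescaling by `λ ≠ 0` is a
continuous automorphism, hence preserves `μ₀`, and it carries the character `k` to `λk`. So the
Fourier coefficients of an invariant `ψ` are constant on `ℝ ∖ {0}`; being square-summable over an
infinite index set they vanish there, and `ψ` is its zeroth coefficient times the constant `1`. -/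

open scoped ComplexConjugate InnerProductSpace
open Filter Submodule Real

theorem eq_zero_of_summable_of_eventuallyEq_const {ι G : Type*} [Infinite ι] [AddCommGroup G]
    [TopologicalSpace G] [IsTopologicalAddGroup G] [T2Space G] {f : ι → G} {a : G}
    (hf : Summable f) (h : f =ᶠ[cofinite] fun _ => a) : a = 0 :=
  tendsto_nhds_unique (tendsto_const_nhds.congr' h.symm) hf.tendsto_cofinite_zero

theorem HilbertBasis.eq_inner_smul_of_inner_eq_zero {ι 𝕜 E : Type*} [RCLike 𝕜]
    [NormedAddCommGroup E] [InnerProductSpace 𝕜 E] (b : HilbertBasis ι 𝕜 E) {x : E} (i : ι)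
    (h : ∀ j ≠ i, ⟪b j, x⟫_𝕜 = 0) : x = ⟪b i, x⟫_𝕜 • b i := by
  have hx := b.hasSum_repr x
  simp_rw [b.repr_apply_apply] at hx
  exact hx.unique (hasSum_single i fun j hj => by rw [h j hj, zero_smul])

lemma RBar.apply_zero (x : RBar) : (x : ℝ → Circle) 0 = 1 := by
  simpa using x.2 0 0

lemma RBar.apply_neg (x : RBar) (a : ℝ) : (x : ℝ → Circle) (-a) = ((x : ℝ → Circle) a)⁻¹ := by
  refine eq_inv_of_mul_eq_one_left ?_
  rw [← x.2, neg_add_cancel, RBar.apply_zero]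

noncomputable def RBar.ofReal (s : ℝ) : RBar :=
  ⟨fun t => Circle.exp (s * t), fun a b => by simp only [mul_add, Circle.exp_add]⟩

noncomputable def bohrFourier (k : ℝ) : C(RBar, ℂ) :=
  ⟨fun x => ((x : ℝ → Circle) k : ℂ),
    continuous_subtype_val.comp ((continuous_apply k).comp continuous_subtype_val)⟩

@[simp]
lemma bohrFourier_apply (k : ℝ) (x : RBar) : bohrFourier k x = ((x : ℝ → Circle) k : ℂ) := rfl

lemma bohrFourier_zero : bohrFourier 0 = 1 := by
  ext x; simp [RBar.apply_zero]

lemma bohrFourier_add {k j : ℝ} {x : RBar} :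
    bohrFourier (k + j) x = bohrFourier k x * bohrFourier j x := by
  rw [bohrFourier_apply, x.2, Circle.coe_mul]; rfl

lemma bohrFourier_neg {k : ℝ} {x : RBar} : bohrFourier (-k) x = conj (bohrFourier k x) := by
  rw [bohrFourier_apply, RBar.apply_neg, Circle.coe_inv_eq_conj]; rfl

lemma bohrFourier_mul {k : ℝ} {x y : RBar} :
    bohrFourier k (x * y) = bohrFourier k x * bohrFourier k y := by
  simp

lemma bohrFourier_ofReal_pi_div {k : ℝ} (hk : k ≠ 0) :
    bohrFourier k (RBar.ofReal (π / k)) = -1 := by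
  simp [RBar.ofReal, div_mul_cancel₀ _ hk, Circle.coe_exp, Complex.exp_pi_mul_I]

noncomputable def bohrFourierSubalgebra : StarSubalgebra ℂ C(RBar, ℂ) where
  toSubalgebra := Algebra.adjoin ℂ (Set.range bohrFourier)
  star_mem' := by
    change Algebra.adjoin ℂ (Set.range bohrFourier) ≤
      star (Algebra.adjoin ℂ (Set.range bohrFourier))
    refine Algebra.adjoin_le ?_
    rintro - ⟨k, rfl⟩
    exact Algebra.subset_adjoin ⟨-k, ContinuousMap.ext fun _ => bohrFourier_neg⟩

theorem bohrFourierSubalgebra_coe : Subalgebra.toSubmodule bohrFourierSubalgebra.toSubalgebra =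
    span ℂ (Set.range bohrFourier) := by
  apply Algebra.adjoin_eq_span_of_subset
  refine Set.Subset.trans (fun f hf => ?_) subset_span
  refine Submonoid.closure_induction (fun _ => id) ⟨0, bohrFourier_zero⟩ ?_ hf
  rintro - - - - ⟨k, rfl⟩ ⟨j, rfl⟩
  exact ⟨k + j, ContinuousMap.ext fun _ => bohrFourier_add⟩

theorem bohrFourierSubalgebra_separatesPoints : bohrFourierSubalgebra.SeparatesPoints := by
  intro x y hxy
  obtain ⟨k, hk⟩ := Function.ne_iff.mp (Subtype.coe_ne_coe.mpr hxy)
  exact ⟨_, ⟨bohrFourier k, Algebra.subset_adjoin ⟨k, rfl⟩, rfl⟩,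
    fun h => hk (Subtype.ext h)⟩

theorem span_bohrFourier_closure_eq_top :
    (span ℂ (Set.range bohrFourier)).topologicalClosure = ⊤ := by
  rw [← bohrFourierSubalgebra_coe]
  exact congr_arg (Subalgebra.toSubmodule <| StarSubalgebra.toSubalgebra ·)
    (ContinuousMap.starSubalgebra_topologicalClosure_eq_top_of_separatesPoints _
      bohrFourierSubalgebra_separatesPoints)

section

variable (μ : Measure RBar)

noncomputable abbrev bohrFourierLp [IsFiniteMeasure μ] (k : ℝ) : Lp ℂ 2 μ :=
  ContinuousMap.toLp (E := ℂ) 2 μ ℂ (bohrFourier k)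

theorem coeFn_bohrFourierLp [IsFiniteMeasure μ] (k : ℝ) :
    bohrFourierLp μ k =ᵐ[μ] bohrFourier k :=
  ContinuousMap.coeFn_toLp μ (bohrFourier k)

theorem span_bohrFourierLp_closure_eq_top [IsFiniteMeasure μ] [μ.WeaklyRegular] :
    (span ℂ (Set.range (bohrFourierLp μ))).topologicalClosure = ⊤ := by
  convert! (ContinuousMap.toLp_denseRange ℂ μ ℂ (p := 2)
    (by simp)).topologicalClosure_map_submodule span_bohrFourier_closure_eq_top
  rw [map_span, ← Set.range_comp']
  rfl

theorem integral_bohrFourier_eq_zero [μ.IsMulLeftInvariant] {k : ℝ} (hk : k ≠ 0) :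
    ∫ x, bohrFourier k x ∂μ = 0 :=
  integral_eq_zero_of_mul_left_eq_neg (g := RBar.ofReal (π / k)) fun x => by
    rw [bohrFourier_mul, bohrFourier_ofReal_pi_div hk, neg_one_mul]

theorem orthonormal_bohrFourierLp [μ.IsMulLeftInvariant] [IsProbabilityMeasure μ] :
    Orthonormal ℂ (bohrFourierLp μ) := by
  rw [orthonormal_iff_ite]
  intro k j
  rw [ContinuousMap.inner_toLp μ (bohrFourier k) (bohrFourier j)]
  simp_rw [← bohrFourier_neg, ← bohrFourier_add]
  split_ifs with h
  · simp [h, bohrFourier_zero]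
  · exact integral_bohrFourier_eq_zero μ (sub_ne_zero.mpr (Ne.symm h))

noncomputable def bohrFourierBasis [μ.IsMulLeftInvariant] [IsProbabilityMeasure μ]
    [μ.WeaklyRegular] : HilbertBasis ℝ ℂ (Lp ℂ 2 μ) :=
  HilbertBasis.mk (orthonormal_bohrFourierLp μ) (span_bohrFourierLp_closure_eq_top μ).ge

@[simp]
theorem coe_bohrFourierBasis [μ.IsMulLeftInvariant] [IsProbabilityMeasure μ] [μ.WeaklyRegular] :
    ⇑(bohrFourierBasis μ) = bohrFourierLp μ :=
  HilbertBasis.coe_mk _ _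

end

theorem continuous_scaleBohr (l : ℝ) : Continuous (scaleBohr l) := by
  apply Continuous.subtype_mk
  exact continuous_pi fun k => (continuous_apply (l * k)).comp continuous_subtype_val

noncomputable def scaleBohrEquiv {l : ℝ} (hl : l ≠ 0) : RBar ≃ₜ* RBar where
  toFun := scaleBohr l
  invFun := scaleBohr l⁻¹
  left_inv x := Subtype.ext <| funext fun k => by simp [scaleBohr, hl]
  right_inv x := Subtype.ext <| funext fun k => by simp [scaleBohr, hl]
  map_mul' _ _ := rfl
  continuous_toFun := continuous_scaleBohr l
  continuous_invFun := continuous_scaleBohr l⁻¹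

theorem measurePreserving_scaleBohr (μ : Measure RBar) [μ.IsHaarMeasure] [IsProbabilityMeasure μ]
    {l : ℝ} (hl : l ≠ 0) : MeasurePreserving (scaleBohr l) μ μ := by
  let e := scaleBohrEquiv hl
  have : IsProbabilityMeasure (μ.map e) :=
    Measure.isProbabilityMeasure_map e.continuous.aemeasurable
  exact ⟨e.continuous.measurable, Measure.isHaarMeasure_eq_of_isProbabilityMeasure (μ.map e) μ⟩

theorem compMeasurePreserving_bohrFourierLp {μ : Measure RBar} [IsFiniteMeasure μ] {l : ℝ}
    (hl : MeasurePreserving (scaleBohr l) μ μ) (k : ℝ) :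
    Lp.compMeasurePreserving (scaleBohr l) hl (bohrFourierLp μ k) = bohrFourierLp μ (l * k) := by
  refine Lp.ext ?_
  filter_upwards [Lp.coeFn_compMeasurePreserving (bohrFourierLp μ k) hl,
    hl.quasiMeasurePreserving.ae_eq_comp (coeFn_bohrFourierLp μ k),
    coeFn_bohrFourierLp μ (l * k)] with x h₁ h₂ h₃
  rw [h₁, h₂, h₃]
  rfl

theorem inner_bohrFourierLp_mul_eq_of_ae_invariant {μ : Measure RBar} [IsFiniteMeasure μ] {l : ℝ}
    (hl : MeasurePreserving (scaleBohr l) μ μ) {ψ : RBar → ℂ} (hψ : MemLp ψ 2 μ)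
    (hinv : (fun x => ψ (scaleBohr l x)) =ᵐ[μ] ψ) (k : ℝ) :
    ⟪bohrFourierLp μ (l * k), hψ.toLp ψ⟫_ℂ = ⟪bohrFourierLp μ k, hψ.toLp ψ⟫_ℂ := by
  have hψl : Lp.compMeasurePreserving (scaleBohr l) hl (hψ.toLp ψ) = hψ.toLp ψ :=
    (Lp.toLp_compMeasurePreserving hψ hl).trans (MemLp.toLp_congr _ _ hinv)
  let U := Lp.compMeasurePreservingₗᵢ (E := ℂ) (p := 2) ℂ (scaleBohr l) hl
  rw [← U.inner_map_map (bohrFourierLp μ k)]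
  exact congr_arg₂ _ (compMeasurePreserving_bohrFourierLp hl k).symm hψl.symm

/-- Ergodicity of the Haar measure on the Bohr compactification of `ℝ` under the
rescaling action of `ℝ \ {0}`: any `ψ ∈ L²(R̄, μ₀)` invariant (a.e.) under every
rescaling `λ*`, `λ ≠ 0`, is a.e. equal to a constant. -/
theorem haar_ergodic_under_scaling
    (μ₀ : Measure RBar) [μ₀.IsHaarMeasure] [IsProbabilityMeasure μ₀]
    (ψ : RBar → ℂ) (hψ : MemLp ψ 2 μ₀)
    (hinv : ∀ l : ℝ, l ≠ 0 → (fun x : RBar => ψ (scaleBohr l x)) =ᵐ[μ₀] ψ) :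
    ∃ c : ℂ, ψ =ᵐ[μ₀] fun _ => c := by
  set b := bohrFourierBasis μ₀
  set f := hψ.toLp ψ
  have hconst : ∀ k ≠ 0, ⟪b k, f⟫_ℂ = ⟪b 1, f⟫_ℂ := fun k hk => by
    simpa [b] using inner_bohrFourierLp_mul_eq_of_ae_invariant
      (measurePreserving_scaleBohr μ₀ hk) hψ (hinv k hk) 1
  have hone : ⟪b 1, f⟫_ℂ = 0 := by
    have h := eq_zero_of_summable_of_eventuallyEq_const (a := ‖⟪b 1, f⟫_ℂ‖ ^ 2)
      (b.orthonormal.inner_products_summable f)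
      (mem_of_superset (Set.finite_singleton 0).compl_mem_cofinite fun k hk => by
        change ‖⟪b k, f⟫_ℂ‖ ^ 2 = _
        rw [hconst k hk])
    simpa using h
  set c := ⟪b 0, f⟫_ℂ
  have hf : f = c • b 0 :=
    b.eq_inner_smul_of_inner_eq_zero 0 fun k hk => (hconst k hk).trans hone
  have hfψ : (f : RBar → ℂ) =ᵐ[μ₀] ψ := hψ.coeFn_toLp
  refine ⟨c, ?_⟩
  filter_upwards [hfψ, Lp.coeFn_smul c (b 0), coeFn_bohrFourierLp μ₀ 0]
    with x hψx hcx hbx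
  rw [← hψx, hf, hcx, Pi.smul_apply, coe_bohrFourierBasis, hbx, bohrFourier_zero]
  simp
end
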